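/- Let θ ∈ (0,1]. There exists C > 0, depending only on θ, the polynomial degree k, and the shape regularity of the mesh, such that for every element Q of the parametric Bézier mesh and every measurable set S ⊂ Q with |S| ≥ θ|Q|, one has ‖p‖_{L^∞(Q)} ≤ C h^{−d/2} ‖p‖_{L²(S)} for all tensor-product polynomials p ∈ Q_k(R^d), where h is the diameter of Q. -/

import Mathlib

/-!
Polynomials of coordinate degree at most `k` form a finite-dimensional space, and a nonzero one
vanishes only on a Lebesgue-null set. Hence on the unit cube the least `L²`-mass of `p ≠ 0` over
sets of measure at least `θ` is positive; it depends continuously on `p`, so by compactness of the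
unit sphere of coefficient vectors it is at least `ε ‖c‖²` for the coefficients `c` of `p`, while
`‖c‖` bounds `‖p‖_∞`. The affine map of the unit cube onto a box `Q` preserves `Q_k` and scales
integrals by `|Q|`, which gives `‖p‖_{L^∞(Q)} ≤ K |Q|^{-1/2} ‖p‖_{L²(S)}`; shape regularity gives
`|Q| ≥ (ρ h)^d`.
-/

open Set Metric MeasureTheory

noncomputable section

/-- Euclidean space `ℝᵈ`. -/
abbrev Euc (d : ℕ) : Type := EuclideanSpace ℝ (Fin d)

/-- The open axis-aligned box with lower corner `a` and upper corner `b`. -/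
def box {d : ℕ} (a b : Fin d → ℝ) : Set (Euc d) :=
  {x : Euc d | ∀ i, x i ∈ Ioo (a i) (b i)}

/-- Tensor-product polynomial functions of coordinate degree at most `k`
(the space `Q_k(ℝᵈ)`). -/
def IsQPoly {d : ℕ} (k : ℕ) (f : Euc d → ℝ) : Prop :=
  ∃ P : MvPolynomial (Fin d) ℝ, (∀ i, P.degreeOf i ≤ k) ∧
    ∀ x : Euc d, f x = MvPolynomial.eval (fun i => x i) P

open Filter Topology

section SetIntegralSq

variable {X : Type*} [MeasurableSpace X] {μ : Measure X} [IsFiniteMeasure μ]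

theorem exists_pos_le_setIntegral_sq {f : X → ℝ} (hf : Measurable f)
    (hint : Integrable (fun x => f x ^ 2) μ) (hzero : μ {x | f x = 0} = 0) {θ : ℝ}
    (hθ : 0 < θ) :
    ∃ δ > 0, ∀ S, MeasurableSet S → θ ≤ μ.real S → δ ≤ ∫ x in S, f x ^ 2 ∂μ := by
  have hInter : ⋂ t > (0 : ℝ), {x | f x ^ 2 < t} = {x | f x = 0} := by
    ext x
    simp only [mem_iInter, mem_ofPred_eq]
    refine ⟨fun h => ?_, fun hx t ht => by simpa [hx] using ht⟩
    by_contra hx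
    exact lt_irrefl _ (h _ (by positivity))
  have hlim : Tendsto (fun t => μ {x | f x ^ 2 < t}) (𝓝[>] 0) (𝓝 0) := by
    rw [← hzero, ← hInter]
    exact tendsto_measure_biInter_gt
      (fun t _ => (measurableSet_lt (hf.pow_const 2) measurable_const).nullMeasurableSet)
      (fun _ _ _ hij _ hx => lt_of_lt_of_le hx hij) ⟨1, one_pos, measure_ne_top _ _⟩
  obtain ⟨t, hsmall, ht⟩ := ((hlim.eventually
    (gt_mem_nhds (ENNReal.ofReal_pos.2 (half_pos hθ)))).and self_mem_nhdsWithin).exists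
  refine ⟨t * (θ / 2), by positivity, fun S hS hθS => ?_⟩
  set A := {x | f x ^ 2 < t}
  have hA : MeasurableSet A := measurableSet_lt (hf.pow_const 2) measurable_const
  have hlarge : θ / 2 ≤ μ.real (S \ A) := by
    have hA_real : μ.real A < θ / 2 := ENNReal.toReal_lt_of_lt_ofReal hsmall
    linarith [le_measureReal_sdiff (μ := μ) (s₁ := S) (s₂ := A)]
  calc t * (θ / 2) ≤ t * μ.real (S \ A) := by gcongr
    _ ≤ ∫ x in S \ A, f x ^ 2 ∂μ :=
        setIntegral_ge_of_const_le_real (hS.diff hA) (measure_ne_top _ _)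
          (fun x hx => not_lt.1 hx.2) hint.integrableOn
    _ ≤ ∫ x in S, f x ^ 2 ∂μ :=
        setIntegral_mono_set hint.integrableOn (ae_of_all _ fun x => sq_nonneg _)
          sdiff_subset.eventuallyLE

theorem integrable_sq_of_ae_abs_le {f : X → ℝ} (hf : AEStronglyMeasurable f μ) {M : ℝ}
    (hM : ∀ᵐ x ∂μ, |f x| ≤ M) : Integrable (fun x => f x ^ 2) μ :=
  .of_bound (hf.pow 2) (M ^ 2) <| hM.mono fun x hx => by
    rw [Real.norm_eq_abs, abs_pow]
    exact pow_le_pow_left₀ (abs_nonneg _) hx 2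

section LinearFamily

variable {E : Type*} [NormedAddCommGroup E] [NormedSpace ℝ E] {F : E →ₗ[ℝ] X → ℝ} {N : ℝ}

theorem abs_setIntegral_sq_sub_le (hmeas : ∀ c, Measurable (F c))
    (hbound : ∀ c, ∀ᵐ x ∂μ, |F c x| ≤ N * ‖c‖) (S : Set X) (c c' : E) :
    |∫ x in S, F c x ^ 2 ∂μ - ∫ x in S, F c' x ^ 2 ∂μ| ≤
      N ^ 2 * (‖c‖ + ‖c'‖) * ‖c - c'‖ * μ.real univ := by
  have hint : ∀ c, Integrable (fun x => F c x ^ 2) μ := fun c =>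
    integrable_sq_of_ae_abs_le (hmeas c).aestronglyMeasurable (hbound c)
  rw [← integral_sub (hint c).integrableOn (hint c').integrableOn, ← Real.norm_eq_abs]
  refine (norm_setIntegral_le_of_norm_le_const_ae (measure_lt_top _ _) ?_).trans
    (mul_le_mul_of_nonneg_left (measureReal_mono (subset_univ S)) (by positivity))
  filter_upwards [ae_restrict_of_ae (hbound c), ae_restrict_of_ae (hbound c'),
    ae_restrict_of_ae (hbound (c - c'))] with x hc hc' hcc'
  rw [map_sub, Pi.sub_apply] at hcc'
  have hsum : |F c x + F c' x| ≤ N * ‖c‖ + N * ‖c'‖ := (abs_add_le _ _).trans (add_le_add hc hc')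
  calc ‖F c x ^ 2 - F c' x ^ 2‖ = |F c x + F c' x| * |F c x - F c' x| := by
        rw [Real.norm_eq_abs, sq_sub_sq, abs_mul]
    _ ≤ (N * ‖c‖ + N * ‖c'‖) * (N * ‖c - c'‖) :=
        mul_le_mul hsum hcc' (abs_nonneg _) ((abs_nonneg _).trans hsum)
    _ = N ^ 2 * (‖c‖ + ‖c'‖) * ‖c - c'‖ := by ring

theorem exists_pos_le_setIntegral_sq_of_mem_sphere [FiniteDimensional ℝ E]
    (hmeas : ∀ c, Measurable (F c)) (hbound : ∀ c, ∀ᵐ x ∂μ, |F c x| ≤ N * ‖c‖)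
    (hzero : ∀ c ≠ 0, μ {x | F c x = 0} = 0) {θ : ℝ} (hθ : 0 < θ) :
    ∃ ε > 0, ∀ c ∈ sphere (0 : E) 1, ∀ S, MeasurableSet S → θ ≤ μ.real S →
      ε ≤ ∫ x in S, F c x ^ 2 ∂μ := by
  let 𝒮 := {S : Set X // MeasurableSet S ∧ θ ≤ μ.real S}
  rcases isEmpty_or_nonempty 𝒮 with h𝒮 | h𝒮
  · exact ⟨1, one_pos, fun c _ S hS hθS => (h𝒮.false ⟨S, hS, hθS⟩).elim⟩
  rcases (sphere (0 : E) 1).eq_empty_or_nonempty with hE | hE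
  · exact ⟨1, one_pos, fun c hc => by simp [hE] at hc⟩
  let g : E → ℝ := fun c => ⨅ S : 𝒮, ∫ x in S.1, F c x ^ 2 ∂μ
  have hg_le (c : E) (S : 𝒮) : g c ≤ ∫ x in S.1, F c x ^ 2 ∂μ :=
    ciInf_le ⟨0, by rintro _ ⟨S, rfl⟩; exact integral_nonneg fun x => sq_nonneg _⟩ S
  have hg_pos (c : E) (hc : c ≠ 0) : 0 < g c := by
    obtain ⟨δ, hδ, hδS⟩ := exists_pos_le_setIntegral_sq (hmeas c)
      (integrable_sq_of_ae_abs_le (hmeas c).aestronglyMeasurable (hbound c)) (hzero c hc) hθ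
    exact hδ.trans_le (le_ciInf fun S => hδS S.1 S.2.1 S.2.2)
  set K := 2 * N ^ 2 * μ.real univ
  have hg_sub : ∀ c ∈ sphere (0 : E) 1, ∀ c' ∈ sphere (0 : E) 1,
      g c ≤ g c' + K * dist c c' := by
    intro c hc c' hc'
    rw [mem_sphere_zero_iff_norm] at hc hc'
    suffices g c - K * dist c c' ≤ g c' by linarith
    refine le_ciInf fun S => ?_
    have := abs_setIntegral_sq_sub_le hmeas hbound S.1 c c'
    rw [hc, hc', ← dist_eq_norm] at this
    linarith [hg_le c S, (abs_le.1 this).2]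
  have hg_lip : LipschitzOnWith K.toNNReal g (sphere 0 1) := by
    refine LipschitzOnWith.of_dist_le_mul fun c hc c' hc' => ?_
    rw [Real.coe_toNNReal _ (by positivity), Real.dist_eq, abs_sub_le_iff]
    constructor
    · linarith [hg_sub c hc c' hc']
    · linarith [dist_comm c c' ▸ hg_sub c' hc' c hc]
  obtain ⟨c₀, hc₀, hmin⟩ := (isCompact_sphere (0 : E) 1).exists_isMinOn hE hg_lip.continuousOn
  exact ⟨g c₀, hg_pos c₀ (ne_zero_of_mem_unit_sphere ⟨c₀, hc₀⟩),
    fun c hc S hS hθS => (hmin hc).trans (hg_le c ⟨S, hS, hθS⟩)⟩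

theorem exists_pos_mul_norm_sq_le_setIntegral_sq [FiniteDimensional ℝ E]
    (hmeas : ∀ c, Measurable (F c)) (hbound : ∀ c, ∀ᵐ x ∂μ, |F c x| ≤ N * ‖c‖)
    (hzero : ∀ c ≠ 0, μ {x | F c x = 0} = 0) {θ : ℝ} (hθ : 0 < θ) :
    ∃ ε > 0, ∀ c S, MeasurableSet S → θ ≤ μ.real S →
      ε * ‖c‖ ^ 2 ≤ ∫ x in S, F c x ^ 2 ∂μ := by
  obtain ⟨ε, hε, hεS⟩ := exists_pos_le_setIntegral_sq_of_mem_sphere hmeas hbound hzero hθ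
  refine ⟨ε, hε, fun c S hS hθS => ?_⟩
  rcases eq_or_ne c 0 with rfl | hc
  · simp
  set u := ‖c‖⁻¹ • c
  have hFc : F c = ‖c‖ • F u := by simp [u, hc]
  calc ε * ‖c‖ ^ 2 ≤ (∫ x in S, F u x ^ 2 ∂μ) * ‖c‖ ^ 2 := by
        gcongr
        exact hεS u (by simp [u, norm_smul, hc]) S hS hθS
    _ = ∫ x in S, F c x ^ 2 ∂μ := by
        rw [← integral_mul_const, hFc]
        simp only [Pi.smul_apply, smul_eq_mul, mul_pow, mul_comm]

end LinearFamily

theorem exists_abs_le_mul_sqrt_setIntegral_sq {V : Type*} [AddCommGroup V] [Module ℝ V]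
    [FiniteDimensional ℝ V] (F : V →ₗ[ℝ] X → ℝ) {U : Set X} (hU : ∀ᵐ x ∂μ, x ∈ U)
    (hmeas : ∀ v, Measurable (F v)) (hbdd : ∀ v, ∃ M, ∀ x ∈ U, |F v x| ≤ M)
    (hzero : ∀ v ≠ 0, μ {x | F v x = 0} = 0) {θ : ℝ} (hθ : 0 < θ) :
    ∃ K > 0, ∀ v S, MeasurableSet S → θ ≤ μ.real S → ∀ x ∈ U,
      |F v x| ≤ K * √(∫ x in S, F v x ^ 2 ∂μ) := by
  -- transport to coordinates in a basis, where the sup norm makes `F` uniformly bounded on `U`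
  let b := Module.finBasis ℝ V
  choose M hM using fun j => hbdd (b j)
  set N := ∑ j, |M j|
  let G := F ∘ₗ b.equivFun.symm.toLinearMap
  have hG : ∀ c, ∀ x ∈ U, |G c x| ≤ N * ‖c‖ := by
    intro c x hx
    have hGc : G c x = ∑ j, c j * F (b j) x := by simp [G, Finset.sum_apply]
    rw [hGc, Finset.sum_mul]
    refine (Finset.abs_sum_le_sum_abs _ _).trans (Finset.sum_le_sum fun j _ => ?_)
    rw [abs_mul, mul_comm]
    exact mul_le_mul ((hM j x hx).trans (le_abs_self _)) (norm_le_pi_norm c j) (abs_nonneg _)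
      (abs_nonneg _)
  obtain ⟨ε, hε, hεG⟩ := exists_pos_mul_norm_sq_le_setIntegral_sq (F := G) (fun c => hmeas _)
    (fun c => hU.mono (hG c)) (fun c hc => hzero _ (b.equivFun.symm.map_ne_zero_iff.2 hc)) hθ
  refine ⟨(N + 1) / √ε, by positivity, fun v S hS hθS x hx => ?_⟩
  have hGv : G (b.equivFun v) = F v := by simp [G]
  have hnorm : √ε * ‖b.equivFun v‖ ≤ √(∫ x in S, F v x ^ 2 ∂μ) := by
    rw [← hGv, ← Real.sqrt_sq (norm_nonneg _), ← Real.sqrt_mul hε.le]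
    exact Real.sqrt_le_sqrt (hεG _ S hS hθS)
  calc |F v x| = |G (b.equivFun v) x| := by rw [hGv]
    _ ≤ (N + 1) * ‖b.equivFun v‖ := (hG _ x hx).trans (by gcongr; linarith)
    _ = (N + 1) / √ε * (√ε * ‖b.equivFun v‖) := by field_simp
    _ ≤ (N + 1) / √ε * √(∫ x in S, F v x ^ 2 ∂μ) := by gcongr

end SetIntegralSq

theorem MvPolynomial.volume_setOf_eval_eq_zero :
    ∀ {n : ℕ} {P : MvPolynomial (Fin n) ℝ}, P ≠ 0 → volume {x | eval x P = 0} = 0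
  | 0, P, hP => by
    obtain ⟨c, rfl⟩ := C_surjective (Fin 0) P
    have hc : c ≠ 0 := by simpa using hP
    simp [hc]
  | n + 1, P, hP => by
    -- Fubini: for almost every `x`, the slice in the first coordinate is the root set of a
    -- nonzero one-variable polynomial, because the leading coefficient is nonzero at `x`
    set Q := finSuccEquiv ℝ n P
    have hQ : Q.leadingCoeff ≠ 0 :=
      Polynomial.leadingCoeff_ne_zero.2 ((finSuccEquiv ℝ n).map_ne_zero_iff.2 hP)
    have hslice : ∀ᵐ x : Fin n → ℝ, {y : ℝ | eval (Fin.cons y x) P = 0}.Finite := by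
      filter_upwards [measure_eq_zero_iff_ae_notMem.1 (volume_setOf_eval_eq_zero hQ)]
        with x hx
      have hmap : Polynomial.map (eval x) Q ≠ 0 := fun h => hx <| by
        have := congrArg (Polynomial.coeff · Q.natDegree) h
        simp only [Polynomial.coeff_map, Polynomial.coeff_zero] at this
        exact this
      simpa [eval_eq_eval_mv_eval'] using Polynomial.finite_setOfPred_isRoot hmap
    have hZ : MeasurableSet {x : Fin (n + 1) → ℝ | eval x P = 0} :=
      (continuous_eval P).measurable (measurableSet_singleton 0)
    have he := volume_preserving_piFinSuccAbove (fun _ : Fin (n + 1) => ℝ) 0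
    rw [← he.symm.measure_preimage hZ.nullMeasurableSet, Measure.volume_eq_prod,
      Measure.prod_apply_symm (hZ.preimage (MeasurableEquiv.measurable _))]
    refine lintegral_eq_zero_of_ae_eq_zero ?_
    filter_upwards [hslice] with x hx
    simpa [Fin.consEquiv] using hx.measure_zero volume

namespace MvPolynomial

variable {σ R : Type*}

theorem mem_restrictDegree_iff_degreeOf_le [CommSemiring R] {p : MvPolynomial σ R} {n : ℕ} :
    p ∈ restrictDegree σ R n ↔ ∀ i, degreeOf i p ≤ n := by
  simp only [mem_restrictDegree, degreeOf_le_iff]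
  exact ⟨fun h i s hs => h s hs i, fun h s hs i => h i s hs⟩

theorem degreeOf_C_add_C_mul_X_le [CommSemiring R] [Nontrivial R] [DecidableEq σ] (a L : R)
    (i j : σ) : degreeOf j (C a + C L * X i) ≤ if j = i then 1 else 0 :=
  (degreeOf_add_le j _ _).trans <| max_le (by rw [degreeOf_C]; exact Nat.zero_le _) <|
    (degreeOf_C_mul_le _ j L).trans (degreeOf_X j i).le

theorem aeval_C_add_C_mul_X_mem_restrictDegree [CommSemiring R] [Nontrivial R] (a L : σ → R)
    {p : MvPolynomial σ R} {n : ℕ} (hp : p ∈ restrictDegree σ R n) :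
    aeval (fun i => C (a i) + C (L i) * X i) p ∈ restrictDegree σ R n := by
  classical
  rw [p.as_sum, map_sum]
  refine Submodule.sum_mem _ fun s hs => ?_
  rw [aeval_monomial, mem_restrictDegree_iff_degreeOf_le]
  intro j
  calc degreeOf j (algebraMap R _ (coeff s p) *
        s.prod fun i e => (C (a i) + C (L i) * X i) ^ e)
      ≤ ∑ i ∈ s.support, degreeOf j ((C (a i) + C (L i) * X i) ^ s i) :=
        (degreeOf_C_mul_le _ j _).trans (degreeOf_prod_le j _ _)
    _ ≤ ∑ i ∈ s.support, if j = i then s i else 0 := by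
        refine Finset.sum_le_sum fun i _ => (degreeOf_pow_le j _ _).trans ?_
        have := degreeOf_C_add_C_mul_X_le (a i) (L i) i j
        split_ifs at this ⊢
        · simpa using Nat.mul_le_mul_left (s i) this
        · simp_all
    _ ≤ s j := by
        rw [Finset.sum_ite_eq]
        split_ifs <;> simp
    _ ≤ n := (mem_restrictDegree _ _ _).1 hp s hs j

theorem exists_mem_restrictDegree_eval_eq_eval_add_mul [CommSemiring R] [Nontrivial R]
    (a L : σ → R) {p : MvPolynomial σ R} {n : ℕ} (hp : p ∈ restrictDegree σ R n) :
    ∃ q ∈ restrictDegree σ R n, ∀ z, eval z q = eval (a + L * z) p := by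
  refine ⟨aeval (fun i => C (a i) + C (L i) * X i) p,
    aeval_C_add_C_mul_X_mem_restrictDegree a L hp, fun z => ?_⟩
  rw [← coe_aeval_eq_eval, ← coe_aeval_eq_eval]
  refine (DFunLike.congr_fun (comp_aeval (φ := aeval z) _) p).trans ?_
  have hq : (fun i => aeval z (C (a i) + C (L i) * X i)) = a + L * z := by
    ext i; simp
  exact congrArg (aeval · p) hq

end MvPolynomial

open MvPolynomial in
theorem exists_abs_eval_le_mul_sqrt_setIntegral_unitCube (d k : ℕ) {θ : ℝ} (hθ : 0 < θ) :
    ∃ K > 0, ∀ P ∈ restrictDegree (Fin d) ℝ k, ∀ S ⊆ Icc (0 : Fin d → ℝ) 1,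
      MeasurableSet S → θ ≤ volume.real S → ∀ z ∈ Icc (0 : Fin d → ℝ) 1,
        |eval z P| ≤ K * √(∫ z in S, eval z P ^ 2) := by
  have : IsFiniteMeasure (volume.restrict (Icc (0 : Fin d → ℝ) 1)) :=
    isFiniteMeasure_restrict.2 measure_Icc_lt_top.ne
  obtain ⟨K, hK, hKS⟩ := exists_abs_le_mul_sqrt_setIntegral_sq
    (evalₗ ℝ (Fin d) ∘ₗ (restrictDegree (Fin d) ℝ k).subtype)
    (ae_restrict_mem (measurableSet_Icc (a := (0 : Fin d → ℝ)) (b := 1)))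
    (fun P => (continuous_eval _).measurable)
    (fun P => isCompact_Icc.exists_bound_of_continuousOn (continuous_eval _).continuousOn)
    (fun P hP => nonpos_iff_eq_zero.1 <| (Measure.restrict_apply_le _ _).trans_eq <|
      volume_setOf_eval_eq_zero (by simpa using hP)) hθ
  refine ⟨K, hK, fun P hP S hSU hS hθS z hz => ?_⟩
  have := hKS ⟨P, hP⟩ S hS
    (by rwa [Measure.real, Measure.restrict_apply hS, inter_eq_left.2 hSU]) z hz
  rwa [Measure.restrict_restrict hS, inter_eq_left.2 hSU] at this

open Matrix in
theorem map_toLp_add_mul_volume {ι : Type*} [Fintype ι] (a L : ι → ℝ) (hL : ∀ i, L i ≠ 0) :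
    Measure.map (fun z => WithLp.toLp 2 (a + L * z)) volume =
      ENNReal.ofReal |∏ i, L i|⁻¹ • (volume : Measure (EuclideanSpace ℝ ι)) := by
  classical
  have hdiag : (fun z => WithLp.toLp 2 (a + L * z)) =
      WithLp.toLp 2 ∘ (a + ·) ∘ toLin' (diagonal L) := by
    ext z i
    simp [mulVec_diagonal]
  have hdet : (diagonal L).det ≠ 0 := by
    rw [det_diagonal]; exact Finset.prod_ne_zero_iff.2 fun i _ => hL i
  rw [hdiag, ← Measure.map_map (by fun_prop) (by fun_prop),
    ← Measure.map_map (by fun_prop) (by fun_prop), Real.map_matrix_volume_pi_eq_smul_volume_pi hdet,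
    Measure.map_smul, map_add_left_eq_self, Measure.map_smul,
    (PiLp.volume_preserving_toLp ι).map_eq, det_diagonal, abs_inv]

theorem measureReal_preimage_toLp_add_mul {ι : Type*} [Fintype ι] (a : ι → ℝ) {L : ι → ℝ}
    (hL : ∀ i, 0 < L i) {A : Set (EuclideanSpace ℝ ι)} (hA : MeasurableSet A) :
    volume.real ((fun z => WithLp.toLp 2 (a + L * z)) ⁻¹' A) = (∏ i, L i)⁻¹ * volume.real A := by
  have hc : 0 < ∏ i, L i := Finset.prod_pos fun i _ => hL i
  rw [measureReal_def, ← Measure.map_apply (by fun_prop) hA,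
    map_toLp_add_mul_volume a L fun i => (hL i).ne', Measure.smul_apply, smul_eq_mul,
    ENNReal.toReal_mul, abs_of_pos hc, ENNReal.toReal_ofReal (inv_nonneg.2 hc.le), measureReal_def]

theorem setIntegral_preimage_toLp_add_mul {ι : Type*} [Fintype ι] (a : ι → ℝ) {L : ι → ℝ}
    (hL : ∀ i, 0 < L i) {g : EuclideanSpace ℝ ι → ℝ} (hg : Continuous g)
    {S : Set (EuclideanSpace ℝ ι)} (hS : MeasurableSet S) :
    ∫ z in (fun z => WithLp.toLp 2 (a + L * z)) ⁻¹' S, g (WithLp.toLp 2 (a + L * z)) =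
      (∏ i, L i)⁻¹ * ∫ y in S, g y := by
  have hc : 0 < ∏ i, L i := Finset.prod_pos fun i _ => hL i
  have := setIntegral_map (μ := volume) (g := fun z => WithLp.toLp 2 (a + L * z)) hS
    hg.aestronglyMeasurable (by fun_prop)
  rw [map_toLp_add_mul_volume a L fun i => (hL i).ne', abs_of_pos hc, Measure.restrict_smul,
    integral_smul_measure, ENNReal.toReal_ofReal (inv_nonneg.2 hc.le), smul_eq_mul] at this
  exact this.symm

section Box

variable {d : ℕ}

theorem isOpen_box (a b : Fin d → ℝ) : IsOpen (box a b) := by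
  simp only [box, ofPred_forall]
  exact isOpen_iInter_of_finite fun i => isOpen_Ioo.preimage (by fun_prop)

theorem isBounded_box (a b : Fin d → ℝ) : Bornology.IsBounded (box a b) :=
  (isCompact_Icc.image (PiLp.continuous_toLp 2 _)).isBounded.subset fun x hx =>
    mem_image_of_mem (WithLp.toLp 2) (show WithLp.ofLp x ∈ Icc a b from
      ⟨fun i => (hx i).1.le, fun i => (hx i).2.le⟩)

theorem measureReal_box {a b : Fin d → ℝ} (hab : ∀ i, a i < b i) :
    volume.real (box a b) = ∏ i, (b i - a i) := by
  have hbox : box a b = WithLp.ofLp ⁻¹' pi univ fun i => Ioo (a i) (b i) := by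
    ext x; simp [box]
  rw [hbox, measureReal_def, (PiLp.volume_preserving_ofLp _).measure_preimage
    (MeasurableSet.univ_pi fun _ => measurableSet_Ioo).nullMeasurableSet,
    Real.volume_pi_Ioo_toReal fun i => (hab i).le]

theorem diam_box_pos {a b : Fin d → ℝ} (hab : ∀ i, a i < b i) (i : Fin d) :
    0 < diam (box a b) := by
  have : Nontrivial (Euc d) := by
    have : Nonempty (Fin d) := ⟨i⟩
    infer_instance
  have hmid : WithLp.toLp 2 ((a + b) / 2) ∈ box a b := fun j => by
    simp only [Pi.div_apply, Pi.add_apply, Pi.ofNat_apply, mem_Ioo]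
    constructor <;> linarith [hab j]
  exact diam_pos (infinite_of_mem_nhds _ ((isOpen_box a b).mem_nhds hmid)).nontrivial
    (isBounded_box a b)

theorem inv_sqrt_prod_sub_le_rpow_diam_box {a b : Fin d → ℝ} (hab : ∀ i, a i < b i) {ρ : ℝ}
    (hρ : 0 < ρ) (hreg : ∀ i, ρ * diam (box a b) ≤ b i - a i) :
    (√(∏ i, (b i - a i)))⁻¹ ≤ ρ ^ (-(d : ℝ) / 2) * diam (box a b) ^ (-(d : ℝ) / 2) := by
  have hpos : 0 < ∏ _i : Fin d, ρ * diam (box a b) :=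
    Finset.prod_pos fun i _ => mul_pos hρ (diam_box_pos hab i)
  have hρh : 0 ≤ ρ * diam (box a b) := mul_nonneg hρ.le diam_nonneg
  calc (√(∏ i, (b i - a i)))⁻¹ ≤ (√(∏ _i : Fin d, ρ * diam (box a b)))⁻¹ :=
        inv_anti₀ (Real.sqrt_pos.2 hpos)
          (Real.sqrt_le_sqrt (Finset.prod_le_prod (fun _ _ => hρh) fun i _ => hreg i))
    _ = (ρ * diam (box a b)) ^ (-(d : ℝ) / 2) := by
        rw [Finset.prod_const, Finset.card_univ, Fintype.card_fin, Real.sqrt_eq_rpow,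
          ← Real.rpow_natCast, ← Real.rpow_mul hρh, ← Real.rpow_neg hρh]
        ring_nf
    _ = ρ ^ (-(d : ℝ) / 2) * diam (box a b) ^ (-(d : ℝ) / 2) := Real.mul_rpow hρ.le diam_nonneg

theorem preimage_box_toLp_add_mul {a b : Fin d → ℝ} (hab : ∀ i, a i < b i) :
    (fun z => WithLp.toLp 2 (a + (b - a) * z)) ⁻¹' box a b = pi univ fun _ => Ioo 0 1 := by
  ext z
  simp only [box, mem_preimage, mem_ofPred_eq, Set.mem_pi, mem_univ, true_implies, mem_Ioo]
  refine forall_congr' fun i => ?_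
  have := sub_pos.2 (hab i)
  simp only [Pi.add_apply, Pi.mul_apply, Pi.sub_apply]
  constructor <;> rintro ⟨h1, h2⟩ <;> constructor <;> nlinarith

end Box

open MvPolynomial in
theorem exists_abs_le_mul_sqrt_setIntegral_box (d k : ℕ) {θ : ℝ} (hθ : 0 < θ) :
    ∃ K > 0, ∀ a b : Fin d → ℝ, (∀ i, a i < b i) →
      ∀ S : Set (Euc d), MeasurableSet S → S ⊆ box a b →
        θ * volume.real (box a b) ≤ volume.real S →
        ∀ f : Euc d → ℝ, IsQPoly k f → ∀ x ∈ box a b,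
          |f x| ≤ K * (√(∏ i, (b i - a i)))⁻¹ * √(∫ y in S, f y ^ 2) := by
  obtain ⟨K, hK, hcube⟩ := exists_abs_eval_le_mul_sqrt_setIntegral_unitCube d k hθ
  refine ⟨K, hK, fun a b hab S hS hSbox hθS f ⟨P, hPdeg, hfP⟩ x hx => ?_⟩
  set L := b - a
  have hL : ∀ i, 0 < L i := fun i => sub_pos.2 (hab i)
  have hc : 0 < ∏ i, L i := Finset.prod_pos fun i _ => hL i
  set T : (Fin d → ℝ) → Euc d := fun z => WithLp.toLp 2 (a + L * z)
  have hT_box : T ⁻¹' box a b = pi univ fun _ => Ioo 0 1 := preimage_box_toLp_add_mul hab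
  have hcube_sub : (pi univ fun _ => Ioo 0 1 : Set (Fin d → ℝ)) ⊆ Icc 0 1 := fun z hz =>
    ⟨fun i => (hz i trivial).1.le, fun i => (hz i trivial).2.le⟩
  have hθS' : θ ≤ volume.real (T ⁻¹' S) := by
    rw [measureReal_preimage_toLp_add_mul a hL hS, ← div_eq_inv_mul, le_div_iff₀ hc]
    exact (measureReal_box hab).symm ▸ hθS
  obtain ⟨Q, hQ, hQP⟩ := exists_mem_restrictDegree_eval_eq_eval_add_mul a L
    (mem_restrictDegree_iff_degreeOf_le.2 hPdeg)
  have hfT (z : Fin d → ℝ) : f (T z) = eval z Q := by rw [hfP, hQP]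
  have hfcont : Continuous f := by
    rw [funext hfP]; exact (continuous_eval P).comp (by fun_prop)
  set z₀ : Fin d → ℝ := (WithLp.ofLp x - a) / L
  have hz₀ : T z₀ = x := by
    ext i; simp [T, z₀, mul_div_cancel₀ _ (hL i).ne']
  have hz₀U : z₀ ∈ Icc 0 1 := by
    have : z₀ ∈ T ⁻¹' box a b := by rw [mem_preimage, hz₀]; exact hx
    exact hcube_sub (hT_box ▸ this)
  calc |f x| = |eval z₀ Q| := by rw [← hz₀, hfT]
    _ ≤ K * √(∫ z in T ⁻¹' S, eval z Q ^ 2) :=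
        hcube Q hQ _ (((preimage_mono hSbox).trans hT_box.subset).trans hcube_sub)
          (hS.preimage (by fun_prop)) hθS' z₀ hz₀U
    _ = K * (√(∏ i, L i))⁻¹ * √(∫ y in S, f y ^ 2) := by
        have hint : ∫ z in T ⁻¹' S, f (T z) ^ 2 = (∏ i, L i)⁻¹ * ∫ y in S, f y ^ 2 :=
          setIntegral_preimage_toLp_add_mul a hL (hfcont.pow 2) hS
        simp_rw [← hfT]
        rw [hint, Real.sqrt_mul (inv_nonneg.2 hc.le), Real.sqrt_inv, mul_assoc]

/-- Lemma A.4.  Let `θ ∈ (0,1]`.  There exists `C > 0`,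
depending only on `θ`, the polynomial degree `k` and the shape regularity of
the mesh (constant `ρ`), such that for every element `Q` of the parametric
Bézier mesh (an axis-aligned box whose edges are comparable to its diameter
`h = diam Q` with constant `ρ`) and every measurable `S ⊆ Q` with
`|S| ≥ θ |Q|`, one has `‖p‖_{L^∞(Q)} ≤ C h^{-d/2} ‖p‖_{L²(S)}` for every
tensor-product polynomial `p ∈ Q_k(ℝᵈ)`. -/
theorem poly_sup_le_L2_on_large_subset (d k : ℕ) (θ ρ : ℝ)
    (hθ : θ ∈ Ioc (0 : ℝ) 1) (hρ : 0 < ρ) :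
    ∃ C > (0 : ℝ), ∀ a b : Fin d → ℝ, (∀ i, a i < b i) →
      -- shape regularity of the element
      (∀ i, ρ * diam (box a b) ≤ b i - a i) →
      ∀ S : Set (Euc d), MeasurableSet S → S ⊆ box a b →
        θ * (volume (box a b)).toReal ≤ (volume S).toReal →
        ∀ f : Euc d → ℝ, IsQPoly k f →
          ∀ x ∈ box a b,
            |f x| ≤ C * diam (box a b) ^ (-(d : ℝ) / 2) *
              Real.sqrt (∫ y in S, f y ^ 2) := by
  obtain ⟨K, hK, hbox⟩ := exists_abs_le_mul_sqrt_setIntegral_box d k hθ.1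
  refine ⟨K * ρ ^ (-(d : ℝ) / 2), by positivity, fun a b hab hreg S hS hSbox hθS f hf x hx => ?_⟩
  calc |f x| ≤ K * (√(∏ i, (b i - a i)))⁻¹ * √(∫ y in S, f y ^ 2) :=
        hbox a b hab S hS hSbox hθS f hf x hx
    _ ≤ K * (ρ ^ (-(d : ℝ) / 2) * diam (box a b) ^ (-(d : ℝ) / 2)) * √(∫ y in S, f y ^ 2) := by
        gcongr
        exact inv_sqrt_prod_sub_le_rpow_diam_box hab hρ hreg
    _ = K * ρ ^ (-(d : ℝ) / 2) * diam (box a b) ^ (-(d : ℝ) / 2) * √(∫ y in S, f y ^ 2) := by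
        ring

end
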